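/- arXiv:2605.22752 — 2 statements merged into one kernel-verified Lean document; each statement's English description precedes it below -/
import Mathlib

section
/- For each integer Q ≥ 2, the sum over consecutive pairs (b, b') of denominators in the Farey dissection of level Q of min{b, b'}/(b·b')² is O(1/Q). -/
/-- The Farey set of level `Q`: rationals in `[0,1]` with denominator at most `Q`. -/
def Farey (Q : ℕ) : Set ℚ := {q : ℚ | 0 ≤ q ∧ q ≤ 1 ∧ q.den ≤ Q}

/-- `q < q'` are consecutive in the Farey sequence of level `Q`. -/
def FareyConsecutive (Q : ℕ) (q q' : ℚ) : Prop :=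
  q ∈ Farey Q ∧ q' ∈ Farey Q ∧ q < q' ∧ ∀ r ∈ Farey Q, ¬(q < r ∧ r < q')

/-- Any two rationals `q < q'` differ by at least `1/(den·den')`. -/
lemma farey_gap {q q' : ℚ} (h : q < q') :
    1 ≤ (q' - q) * ((q.den : ℚ) * (q'.den : ℚ)) := by
  set N : ℤ := q'.num * q.den - q.num * q'.den with hN
  have key : ((N : ℚ)) = (q' - q) * ((q.den : ℚ) * (q'.den : ℚ)) := by
    have e : ∀ r : ℚ, (r.num : ℚ) = r * r.den := fun r => (Rat.mul_den_eq_num r).symm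
    push_cast [hN]
    rw [e q, e q']
    ring
  have hpos : (0 : ℚ) < (N : ℚ) := by
    rw [key]
    have h1 : (0:ℚ) < q' - q := sub_pos.mpr h
    have h2 : (0:ℚ) < (q.den : ℚ) := by exact_mod_cast q.pos
    have h3 : (0:ℚ) < (q'.den : ℚ) := by exact_mod_cast q'.pos
    positivity
  have : 0 < N := by exact_mod_cast hpos
  have : 1 ≤ N := this
  calc (1:ℚ) ≤ (N:ℚ) := by exact_mod_cast this
    _ = _ := key

/-- For consecutive Farey fractions at level `Q`, the denominators sum to more than `Q`. -/
lemma farey_den_add {Q : ℕ} {q q' : ℚ} (h : FareyConsecutive Q q q') :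
    Q < q.den + q'.den := by
  obtain ⟨⟨hq0, hq1, hqd⟩, ⟨hq'0, hq'1, hq'd⟩, hlt, hbet⟩ := h
  by_contra hle
  push_neg at hle
  set b : ℤ := (q.den : ℤ) + (q'.den : ℤ) with hb
  have hbpos : (0 : ℤ) < b := by positivity
  have hbQ : (0 : ℚ) < (b : ℚ) := by exact_mod_cast hbpos
  set r : ℚ := ((q.num + q'.num : ℤ) : ℚ) / ((b : ℤ) : ℚ) with hr
  have hqd' : (0:ℚ) < (q.den : ℚ) := by exact_mod_cast q.pos
  have hq'd' : (0:ℚ) < (q'.den : ℚ) := by exact_mod_cast q'.pos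
  -- r's denominator is at most b ≤ Q
  have hden : (r.den : ℤ) ∣ b := by
    rw [hr, ← Rat.divInt_eq_div]
    exact Rat.den_dvd _ _
  have hrden : r.den ≤ Q := by
    have h1 : (r.den : ℤ) ≤ b := Int.le_of_dvd hbpos hden
    have h2 : b ≤ (Q : ℤ) := by rw [hb]; exact_mod_cast hle
    exact_mod_cast h1.trans h2
  -- q < r
  have hqr : q < r := by
    rw [hr, lt_div_iff₀ hbQ]
    have : q * (b : ℚ) = (q.num : ℚ) + q * q'.den := by
      push_cast [hb]; rw [mul_add, Rat.mul_den_eq_num]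
    rw [this]
    push_cast
    have : q * (q'.den : ℚ) < (q'.num : ℚ) := by
      rw [← Rat.mul_den_eq_num q']
      exact mul_lt_mul_of_pos_right hlt hq'd'
    linarith
  -- r < q'
  have hrq' : r < q' := by
    rw [hr, div_lt_iff₀ hbQ]
    have : q' * (b : ℚ) = q' * q.den + (q'.num : ℚ) := by
      push_cast [hb]; rw [mul_add, Rat.mul_den_eq_num]
    rw [this]
    push_cast
    have : (q.num : ℚ) < q' * (q.den : ℚ) := by
      rw [← Rat.mul_den_eq_num q]
      exact mul_lt_mul_of_pos_right hlt hqd'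
    linarith
  exact hbet r ⟨hq0.trans hqr.le, hrq'.le.trans hq'1, hrden⟩ ⟨hqr, hrq'⟩

lemma farey_disjoint {Q : ℕ} {p p' : ℚ × ℚ} (h : FareyConsecutive Q p.1 p.2)
    (h' : FareyConsecutive Q p'.1 p'.2) (hne : p ≠ p') :
    Disjoint (Set.Ioo (p.1 : ℝ) (p.2 : ℝ)) (Set.Ioo (p'.1 : ℝ) (p'.2 : ℝ)) := by
  obtain ⟨hF1, hF2, hlt, hbet⟩ := h
  obtain ⟨hF1', hF2', hlt', hbet'⟩ := h'
  have key : p.2 ≤ p'.1 ∨ p'.2 ≤ p.1 := by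
    rcases lt_trichotomy p.1 p'.1 with h1 | h1 | h1
    · left
      by_contra hc
      push_neg at hc
      exact hbet p'.1 hF1' ⟨h1, hc⟩
    · exfalso
      apply hne
      have h2 : p.2 = p'.2 := by
        rcases lt_trichotomy p.2 p'.2 with h2 | h2 | h2
        · exact absurd ⟨h1 ▸ hlt, h2⟩ (hbet' p.2 hF2)
        · exact h2
        · exact absurd ⟨h1.symm ▸ hlt', h2⟩ (hbet p'.2 hF2')
      exact Prod.ext h1 h2
    · right
      by_contra hc
      push_neg at hc
      exact hbet' p.1 hF1 ⟨h1, hc⟩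
  rw [Set.disjoint_left]
  rintro x ⟨ha1, ha2⟩ ⟨hb1, hb2⟩
  rcases key with hk | hk
  · have : (p.2 : ℝ) ≤ (p'.1 : ℝ) := by exact_mod_cast hk
    linarith
  · have : (p'.2 : ℝ) ≤ (p.1 : ℝ) := by exact_mod_cast hk
    linarith

/-- The sum over consecutive pairs `(b, b')` of denominators in the Farey dissection of
level `Q` of `min (b, b') / (b * b')^2` is `O(1/Q)`. -/
theorem farey_denominator_sum_bound :
    ∃ C : ℝ, 0 < C ∧ ∀ Q : ℕ, 2 ≤ Q → ∀ S : Finset (ℚ × ℚ),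
      (∀ p ∈ S, FareyConsecutive Q p.1 p.2) →
      ∑ p ∈ S, (min p.1.den p.2.den : ℝ) / ((p.1.den : ℝ) * (p.2.den : ℝ)) ^ 2
        ≤ C / (Q : ℝ) := by
  refine ⟨2, by norm_num, ?_⟩
  intro Q hQ S hS
  have hQR : (0:ℝ) < (Q:ℝ) := by positivity
  set len : ℚ × ℚ → ℝ := fun p => (p.2 : ℝ) - (p.1 : ℝ) with hlen
  have hlen_nonneg : ∀ p ∈ S, 0 ≤ len p := by
    intro p hp
    have := (hS p hp).2.2.1
    simp only [hlen, sub_nonneg]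
    exact_mod_cast this.le
  -- Step A: termwise bound
  have stepA : ∀ p ∈ S,
      (min p.1.den p.2.den : ℝ) / ((p.1.den : ℝ) * (p.2.den : ℝ)) ^ 2
        ≤ 2 / (Q:ℝ) * len p := by
    intro p hp
    have hc := hS p hp
    set b := p.1.den with hbdef
    set b' := p.2.den with hb'def
    have hb : (0:ℝ) < (b:ℝ) := by exact_mod_cast p.1.pos
    have hb' : (0:ℝ) < (b':ℝ) := by exact_mod_cast p.2.pos
    -- 1/(b b') ≤ len p
    have hgap : (1:ℝ) ≤ len p * ((b:ℝ) * (b':ℝ)) := by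
      have := farey_gap hc.2.2.1
      have : (1:ℝ) ≤ ((p.2 - p.1 : ℚ) : ℝ) * ((b:ℝ) * (b':ℝ)) := by
        exact_mod_cast this
      simpa [hlen, Rat.cast_sub] using this
    have h1 : (1:ℝ) / ((b:ℝ) * (b':ℝ)) ≤ len p := by
      rw [div_le_iff₀ (by positivity)]
      linarith
    -- min/(b b') ≤ 2/Q
    have hsum : Q < b + b' := farey_den_add hc
    have hmin2 : (min b b') * Q ≤ 2 * (b * b') := by
      calc (min b b') * Q ≤ (min b b') * (b + b') := by
            exact Nat.mul_le_mul_left _ hsum.le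
        _ = min b b' * b + min b b' * b' := by ring
        _ ≤ b' * b + b * b' := by
            gcongr <;> [exact min_le_right _ _; exact min_le_left _ _]
        _ = 2 * (b * b') := by ring
    have h2 : (min b b' : ℝ) / ((b:ℝ) * (b':ℝ)) ≤ 2 / (Q:ℝ) := by
      rw [div_le_div_iff₀ (by positivity) hQR]
      have : ((min b b' * Q : ℕ) : ℝ) ≤ ((2 * (b * b') : ℕ) : ℝ) := by
        exact_mod_cast hmin2
      push_cast at this
      linarith
    calc (min b b' : ℝ) / ((b:ℝ) * (b':ℝ)) ^ 2
        = ((min b b' : ℝ) / ((b:ℝ) * (b':ℝ))) * ((1:ℝ) / ((b:ℝ) * (b':ℝ))) := by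
          rw [div_mul_div_comm, mul_one, sq]
      _ ≤ (2 / (Q:ℝ)) * len p := by
          apply mul_le_mul h2 h1 (by positivity) (by positivity)
  -- Step B: sum of lengths at most 1
  have stepB : ∑ p ∈ S, len p ≤ 1 := by
    have hdisj : (S : Set (ℚ × ℚ)).PairwiseDisjoint
        (fun p : ℚ × ℚ => Set.Ioo (p.1 : ℝ) (p.2 : ℝ)) := by
      intro p hp p' hp' hne
      exact farey_disjoint (hS p hp) (hS p' hp') hne
    have hmeas := MeasureTheory.measure_biUnion_finset (μ := MeasureTheory.volume) hdisj
      (fun p _ => measurableSet_Ioo)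
    have hsub : (⋃ p ∈ S, Set.Ioo (p.1 : ℝ) (p.2 : ℝ)) ⊆ Set.Icc (0:ℝ) 1 := by
      intro x hx
      simp only [Set.mem_iUnion] at hx
      obtain ⟨p, hp, hx1, hx2⟩ := hx
      have h0 : (0:ℝ) ≤ (p.1 : ℝ) := by exact_mod_cast (hS p hp).1.1
      have h1 : ((p.2 : ℝ)) ≤ 1 := by exact_mod_cast (hS p hp).2.1.2.1
      exact ⟨h0.trans hx1.le, hx2.le.trans h1⟩
    have hle : ∑ p ∈ S, MeasureTheory.volume (Set.Ioo (p.1 : ℝ) (p.2 : ℝ)) ≤ 1 := by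
      rw [← hmeas]
      calc MeasureTheory.volume (⋃ p ∈ S, Set.Ioo (p.1 : ℝ) (p.2 : ℝ))
          ≤ MeasureTheory.volume (Set.Icc (0:ℝ) 1) :=
            MeasureTheory.measure_mono hsub
        _ = 1 := by simp [Real.volume_Icc]
    have hvol : ∀ p ∈ S, MeasureTheory.volume (Set.Ioo (p.1 : ℝ) (p.2 : ℝ))
        = ENNReal.ofReal (len p) := by
      intro p hp; rw [Real.volume_Ioo]
    rw [Finset.sum_congr rfl hvol] at hle
    rw [← ENNReal.ofReal_sum_of_nonneg hlen_nonneg] at hle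
    rw [← ENNReal.ofReal_one] at hle
    exact (ENNReal.ofReal_le_ofReal_iff (by norm_num)).mp hle
  calc ∑ p ∈ S, (min p.1.den p.2.den : ℝ) / ((p.1.den : ℝ) * (p.2.den : ℝ)) ^ 2
      ≤ ∑ p ∈ S, 2 / (Q:ℝ) * len p := Finset.sum_le_sum stepA
    _ = 2 / (Q:ℝ) * ∑ p ∈ S, len p := by rw [Finset.mul_sum]
    _ ≤ 2 / (Q:ℝ) * 1 := by
        apply mul_le_mul_of_nonneg_left stepB (by positivity)
    _ = 2 / (Q:ℝ) := by ring
end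

section
/- If L(n) = o(n/log n) as n → ∞, then the sum of the reciprocals of the awkward primes converges. -/
open scoped Classical

/-- The `k`-th prime (1-indexed): `nthPrime 1 = 2`. -/
noncomputable def nthPrime (k : ℕ) : ℕ := Nat.nth Nat.Prime (k - 1)

/-- A (straight) line in the plane. -/
def IsLine (l : Set (ℝ × ℝ)) : Prop :=
  ∃ a b c : ℝ, (a, b) ≠ (0, 0) ∧ l = {p : ℝ × ℝ | a * p.1 + b * p.2 = c}

/-- The `k`-th prime point `(k, p_k)`. -/
noncomputable def primePoint (k : ℕ) : ℝ × ℝ := ((k : ℝ), (nthPrime k : ℝ))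

/-- `L n`: the minimum number of lines needed to cover the first `n` prime points. -/
noncomputable def L (n : ℕ) : ℕ :=
  sInf {m : ℕ | ∃ S : Finset (Set (ℝ × ℝ)), S.card = m ∧ (∀ l ∈ S, IsLine l) ∧
    ∀ k : ℕ, 1 ≤ k → k ≤ n → ∃ l ∈ S, primePoint k ∈ l}

/-- `B n`: the largest number of the first `n` prime points lying on a single line. -/
noncomputable def B (n : ℕ) : ℕ :=
  sSup {m : ℕ | ∃ l : Set (ℝ × ℝ), IsLine l ∧
    m = ((Finset.Icc 1 n).filter (fun k => primePoint k ∈ l)).card}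

open Filter Real
open scoped Nat

/-!
Let `a` be the number of awkward indices before an awkward index `n`. Since `L` is monotone and
jumps at each of them, `a + 1 ≤ L n = o(n / log n)`. Chebyshev's elementary bound
`(n + 1)! ≤ ∏_{i ≤ n} p_i ≤ 4 ^ p_n` gives `n log n ≤ 3 p_n`, and together these yield
`(a + 2) log² (a + 2) ≤ p_n` for large awkward `n`. Distinct awkward indices have distinct `a`, so
the series is dominated by `∑ 1 / (a log² a) < ∞`.
-/

lemma Monotone.count_lt_succ_add_le {f : ℕ → ℕ} (hf : Monotone f) (n : ℕ) :
    Nat.count (fun i => f i < f (i + 1)) n + f 0 ≤ f n := by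
  induction n with
  | zero => simp
  | succ n ih =>
    rw [Nat.count_succ]
    split_ifs with h
    · omega
    · have := hf (Nat.le_add_right n 1); omega

lemma summable_indicator_comp_count {p : ℕ → Prop} [DecidablePred p] {g : ℕ → ℝ}
    (hg : Summable g) : Summable ({i | p i}.indicator (g ∘ Nat.count p)) :=
  summable_subtype_iff_indicator.mp <|
    hg.comp_injective fun a b h => Subtype.ext (Nat.count_injective a.2 b.2 h)

lemma summable_one_div_nat_mul_log_sq : Summable fun n : ℕ => 1 / (n * log n ^ 2) := by
  rw [← summable_condensed_iff_of_eventually_nonneg (Eventually.of_forall fun n => by positivity)]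
  · refine ((summable_one_div_nat_pow.mpr one_lt_two).mul_left (1 / log 2 ^ 2)).congr fun k => ?_
    rcases k.eq_zero_or_pos with rfl | hk
    · simp
    · push_cast
      rw [log_pow]
      field_simp
  · filter_upwards [eventually_ge_atTop 2] with n hn
    have hn' : (2 : ℝ) ≤ n := by exact_mod_cast hn
    have hlog : 0 < log n := log_pos (by linarith)
    gcongr
    · linarith
    · linarith

lemma factorial_succ_le_four_pow_nth_prime (n : ℕ) : (n + 1)! ≤ 4 ^ Nat.nth Nat.Prime n := by
  have hmono := Nat.nth_strictMono Nat.infinite_setOfPred_prime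
  calc (n + 1)! = ∏ i ∈ Finset.range (n + 1), (i + 1) :=
        (Finset.prod_range_add_one_eq_factorial _).symm
    _ ≤ ∏ i ∈ Finset.range (n + 1), Nat.nth Nat.Prime i :=
        Finset.prod_le_prod' fun i _ => by have := Nat.add_two_le_nth_prime i; omega
    _ = ∏ p ∈ (Finset.range (n + 1)).image (Nat.nth Nat.Prime), p :=
        (Finset.prod_image (f := fun p => p) fun a _ b _ h => hmono.injective h).symm
    _ ≤ primorial (Nat.nth Nat.Prime n) := by
        refine Finset.prod_le_prod_of_subset_of_one_le' ?_
          fun p hp _ => (Nat.prime_of_mem_primesLE hp).one_lt.le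
        simp only [Finset.image_subset_iff, Finset.mem_range]
        intro i hi
        exact Nat.mem_primesLE.mpr ⟨hmono.monotone (Nat.lt_succ_iff.mp hi), Nat.prime_nth_prime i⟩
    _ ≤ 4 ^ Nat.nth Nat.Prime n := primorial_le_four_pow _

lemma succ_mul_log_succ_le_nth_prime (n : ℕ) :
    ((n : ℝ) + 1) * log ((n : ℝ) + 1) ≤ 3 * Nat.nth Nat.Prime n := by
  set p := Nat.nth Nat.Prime n
  have hnp : (n : ℝ) + 1 ≤ p := by exact_mod_cast (Nat.add_two_le_nth_prime n).trans' (by omega)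
  have hexp : ((n : ℝ) + 1) ^ (n + 1) ≤ exp ((n : ℝ) + 1) * (n + 1)! := by
    have := pow_div_factorial_le_exp (x := (n : ℝ) + 1) (by positivity) (n + 1)
    rwa [div_le_iff₀ (by positivity)] at this
  have hfact : ((n + 1)! : ℝ) ≤ 4 ^ p := by exact_mod_cast factorial_succ_le_four_pow_nth_prime n
  have hlog :=
    log_le_log (by positivity) (hexp.trans (mul_le_mul_of_nonneg_left hfact (by positivity)))
  rw [log_mul (by positivity) (by positivity), log_exp, log_pow, log_pow] at hlog
  have hlog4 : log 4 < 2 := by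
    have := log_two_lt_d9
    rw [show (4 : ℝ) = 2 ^ 2 by norm_num, log_pow]; push_cast; linarith
  push_cast at hlog
  nlinarith [(Nat.cast_nonneg p : (0 : ℝ) ≤ p)]

lemma one_div_le_one_div_mul_log_sq {m x p : ℝ} (hm : 2 ≤ m) (hx : 1 ≤ log x)
    (hmx : m * log x ≤ x / 3) (hp : x * log x ≤ 3 * p) : 1 / p ≤ 1 / (m * log m ^ 2) := by
  have hlogm : 0 < log m := log_pos (by linarith)
  have hlog : log m ≤ log x := log_le_log (by linarith) (by nlinarith)
  apply one_div_le_one_div_of_le (by positivity)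
  calc m * log m ^ 2 ≤ m * log x ^ 2 := by gcongr
    _ = m * log x * log x := by ring
    _ ≤ x / 3 * log x := by gcongr
    _ ≤ p := by linarith

lemma eventually_mul_log_le_of_isLittleO {f : ℕ → ℝ}
    (h : f =o[atTop] fun n : ℕ => (n : ℝ) / log n) {c : ℝ} (hc : 0 < c) :
    ∀ᶠ n : ℕ in atTop, f n * log n ≤ c * n := by
  filter_upwards [h.bound hc, eventually_ge_atTop 2] with n hbound hn
  have hlog : 0 < log n := log_pos (by exact_mod_cast hn)
  rw [norm_div, norm_of_nonneg hlog.le, RCLike.norm_natCast, mul_div_assoc',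
    le_div_iff₀ hlog] at hbound
  exact (mul_le_mul_of_nonneg_right (le_norm_self _) hlog.le).trans hbound

lemma exists_lines_cover_primePoints (n : ℕ) : ∃ S : Finset (Set (ℝ × ℝ)), (∀ l ∈ S, IsLine l) ∧
    ∀ k : ℕ, 1 ≤ k → k ≤ n → ∃ l ∈ S, primePoint k ∈ l := by
  refine ⟨(Finset.Icc 1 n).image fun k : ℕ => {p | 1 * p.1 + 0 * p.2 = (k : ℝ)}, ?_, ?_⟩
  · simp only [Finset.mem_image]
    rintro _ ⟨k, -, rfl⟩
    exact ⟨1, 0, k, by simp, rfl⟩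
  · intro k hk1 hkn
    exact ⟨_, Finset.mem_image_of_mem _ (Finset.mem_Icc.mpr ⟨hk1, hkn⟩), by simp [primePoint]⟩

lemma L_monotone : Monotone L := by
  intro m n hmn
  obtain ⟨S, hcard, hlines, hcover⟩ :=
    Nat.sInf_mem (s := {m | ∃ S : Finset (Set (ℝ × ℝ)), S.card = m ∧ (∀ l ∈ S, IsLine l) ∧
      ∀ k : ℕ, 1 ≤ k → k ≤ n → ∃ l ∈ S, primePoint k ∈ l})
      (let ⟨S, hS⟩ := exists_lines_cover_primePoints n; ⟨S.card, S, rfl, hS⟩)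
  calc L m ≤ S.card :=
        Nat.sInf_le ⟨S, rfl, hlines, fun k hk1 hkm => hcover k hk1 (hkm.trans hmn)⟩
    _ = L n := hcard

/-- If `L n = o(n / log n)`, then the sum of reciprocals of the awkward primes converges. -/
theorem awkward_primes_reciprocal_sum_converges
    (h : (fun n : ℕ => (L n : ℝ)) =o[Filter.atTop] fun n : ℕ => (n : ℝ) / Real.log n) :
    Summable (fun j : ℕ =>
      if 1 ≤ j ∧ L (j - 1) < L j then (1 : ℝ) / (nthPrime j : ℝ) else 0) := by
  -- The shift by 2 keeps the majorant positive at the first jump, where `log 1 = 0`.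
  have hg : Summable fun a : ℕ => 1 / ((a + 2 : ℝ) * log (a + 2) ^ 2) := by
    simpa using (summable_nat_add_iff 2).mpr summable_one_div_nat_mul_log_sq
  rw [← summable_nat_add_iff 1]
  simp only [le_add_iff_nonneg_left, zero_le, true_and, add_tsub_cancel_right]
  refine Summable.of_norm_bounded_eventually
    (summable_indicator_comp_count (p := fun i => L i < L (i + 1)) hg) ?_
  have hlog := (tendsto_log_atTop.comp tendsto_natCast_atTop_atTop).eventually_ge_atTop 1
  filter_upwards [Nat.cofinite_eq_atTop ▸ (tendsto_add_atTop_nat 1).eventually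
    ((eventually_mul_log_le_of_isLittleO h (c := 1 / 6) (by norm_num)).and hlog)]
    with i ⟨hLi, hlogi⟩
  by_cases hi : L i < L (i + 1)
  · have hcount := L_monotone.count_lt_succ_add_le (i + 1)
    rw [Nat.count_succ, if_pos hi] at hcount
    have hcount' : (Nat.count (fun i => L i < L (i + 1)) i + 2 : ℝ) ≤ 2 * L (i + 1) := by
      norm_cast; omega
    rw [if_pos hi, Set.indicator_of_mem (s := {i | L i < L (i + 1)}) hi,
      norm_of_nonneg (by positivity)]
    refine one_div_le_one_div_mul_log_sq (x := i + 1) (by simp) (by exact_mod_cast hlogi) ?_ ?_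
    · push_cast at hLi; nlinarith
    · simpa [nthPrime] using succ_mul_log_succ_le_nth_prime i
  · simp [hi]
end
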